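/- arXiv:2309.09111 — 7 statements merged into one kernel-verified Lean document; each statement's English description precedes it below -/
import Mathlib

section
/- Fix α ∈ (0,1) and an integer m ≥ 1. Let (A_n)_{n≥m} be a nondecreasing sequence of events (A_n ⊆ A_{n+1}) with A_n ∈ 𝓕_n for each n ≥ m and P(⋃_{n≥m} A_n) ≤ α. Define the process E_n := (1/α)·1_{A_n} for n ≥ m and E_n := 0 for n < m. Then (E_n)_{n≥1} is an e-process: for every stopping time τ′, E[E_{τ′}·1_{τ′<∞}] ≤ 1. -/
open MeasureTheory Set
open scoped ENNReal

/-!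
The stopped process is dominated pointwise, whatever the stopping time, by
`(1/α) · 1_U` with `U = ⋃_{n ≥ m} A n`, whose expectation is `(1/α) · P(U) ≤ 1`.
-/

lemma ENNReal.ofReal_one_div_mul_ofReal_le_one (a : ℝ) :
    ENNReal.ofReal (1 / a) * ENNReal.ofReal a ≤ 1 := by
  rcases le_or_gt a 0 with ha | ha
  · simp [ENNReal.ofReal_of_nonpos ha]
  · rw [← ENNReal.ofReal_mul (by positivity), one_div_mul_cancel ha.ne', ENNReal.ofReal_one]

lemma indicator_le_indicator_biUnion_Ici {Ω : Type*} (A : ℕ → Set Ω) {m n : ℕ} (hn : m ≤ n)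
    (c : ℝ≥0∞) :
    (A n).indicator (fun _ => c) ≤ (⋃ k ∈ {k : ℕ | m ≤ k}, A k).indicator (fun _ => c) :=
  indicator_le_indicator_of_subset (subset_biUnion_of_mem (u := A) hn) fun _ => zero_le

theorem stmt1_miscoverage_is_eprocess_general
    {Ω : Type*} {m0 : MeasurableSpace Ω} (P : Measure Ω)
    (α : ℝ)
    (m : ℕ) (A : ℕ → Set Ω)
    (hAα : P (⋃ n ∈ {n : ℕ | m ≤ n}, A n) ≤ ENNReal.ofReal α)
    (E : ℕ → Ω → ℝ≥0∞)
    (hE : ∀ n ω, E n ω = if m ≤ n then (A n).indicator (fun _ => ENNReal.ofReal (1 / α)) ω else 0)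
    (τ' : Ω → ℕ∞) :
    ∫⁻ ω in {ω | τ' ω ≠ ⊤}, E (τ' ω).toNat ω ∂P ≤ 1 := by
  set U := ⋃ n ∈ {n : ℕ | m ≤ n}, A n
  set c := ENNReal.ofReal (1 / α)
  have hE_le : ∀ n ω, E n ω ≤ U.indicator (fun _ => c) ω := by
    intro n ω
    rw [hE]
    split_ifs with hn
    · exact indicator_le_indicator_biUnion_Ici A hn c ω
    · exact zero_le
  calc ∫⁻ ω in {ω | τ' ω ≠ ⊤}, E (τ' ω).toNat ω ∂P
      ≤ ∫⁻ ω, E (τ' ω).toNat ω ∂P := setLIntegral_le_lintegral _ _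
    _ ≤ ∫⁻ ω, U.indicator (fun _ => c) ω ∂P := lintegral_mono fun ω => hE_le _ ω
    _ ≤ c * P U := lintegral_indicator_const_le U c
    _ ≤ c * ENNReal.ofReal α := by gcongr
    _ ≤ 1 := ENNReal.ofReal_one_div_mul_ofReal_le_one α

/-- **the miscoverage process of a confidence sequence is an e-process.**
Fix `α ∈ (0,1)` and `m ≥ 1`. Let `(A n)_{n ≥ m}` be a nondecreasing sequence of events with
`A n ∈ ℱ n` and `P(⋃_{n ≥ m} A n) ≤ α`. Define `E n = (1/α)·1_{A n}` for `n ≥ m` and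
`E n = 0` for `n < m`. Then for every stopping time `τ'`, `E[E_{τ'}·1_{τ' < ∞}] ≤ 1`. -/
theorem stmt1_miscoverage_is_eprocess
    {Ω : Type*} {m0 : MeasurableSpace Ω} (P : Measure Ω) [IsProbabilityMeasure P]
    (ℱ : MeasureTheory.Filtration ℕ m0) (α : ℝ) (hα : α ∈ Set.Ioo (0 : ℝ) 1)
    (m : ℕ) (hm : 1 ≤ m) (A : ℕ → Set Ω)
    (hmono : ∀ n, m ≤ n → A n ⊆ A (n + 1))
    (hAmeas : ∀ n, m ≤ n → MeasurableSet[ℱ n] (A n))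
    (hAα : P (⋃ n ∈ {n : ℕ | m ≤ n}, A n) ≤ ENNReal.ofReal α)
    (E : ℕ → Ω → ℝ≥0∞)
    (hE : ∀ n ω, E n ω = if m ≤ n then (A n).indicator (fun _ => ENNReal.ofReal (1 / α)) ω else 0)
    (τ' : Ω → ℕ∞) (hτ' : ∀ n : ℕ, MeasurableSet[ℱ n] {ω | τ' ω ≤ (n : ℕ∞)}) :
    ∫⁻ ω in {ω | τ' ω ≠ ⊤}, E (τ' ω).toNat ω ∂P ≤ 1 :=
  stmt1_miscoverage_is_eprocess_general (m0 := m0) P α m A hAα E hE τ'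
end

section
/- Let (𝓕_n)_{n≥0} be a filtration on a probability space (Ω, 𝓕, P). For each integer m ≥ 1, let (E_n^{(m)})_{n≥1} be a nonnegative process adapted to (𝓕_n) with E_n^{(m)} = 0 for all n < m, and suppose that for every stopping time τ′, E[E_{τ′}^{(m)}·1_{τ′<∞} | 𝓕_{m−1}] ≤ 1 almost surely on the event {τ′ ≥ m}. Define M_n := Σ_{m=1}^n E_n^{(m)}. Then (M_n)_{n≥1} is an e-detector: for every stopping time τ′, E[M_{τ′}·1_{τ′<∞}] ≤ E[τ′]. -/
open MeasureTheory Set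
open scoped ENNReal

/-- **sums of restarted e-processes form an e-detector.**
For each `m ≥ 1`, let `(E m n)_{n ≥ 1}` be a nonnegative process adapted to `(ℱ n)` with
`E m n = 0` for `n < m`, such that for every stopping time `τ'` the conditional expectation
of the stopped value `E m (τ') · 1_{τ' < ∞}` given `ℱ (m-1)` is at most `1` a.s. on
`{τ' ≥ m}` (expressed, for the nonnegative process, by the integral inequality
`∫_s E m (τ') · 1_{τ' < ∞} dP ≤ P(s)` over every `ℱ (m-1)`-measurable `s ⊆ {τ' ≥ m}`).
Then `M n := Σ_{m=1}^n E m n` is an e-detector: for every stopping time `τ'`,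
`E[M_{τ'}·1_{τ' < ∞}] ≤ E[τ']`. -/
theorem stmt2_sum_of_eprocesses_is_edetector
    {Ω : Type*} {m0 : MeasurableSpace Ω} (P : Measure Ω) [IsProbabilityMeasure P]
    (ℱ : MeasureTheory.Filtration ℕ m0)
    (E : ℕ → ℕ → Ω → ℝ≥0∞)
    (hadapted : ∀ m n : ℕ, 1 ≤ m → Measurable[ℱ n] (E m n))
    (hzero : ∀ m n : ℕ, 1 ≤ m → n < m → E m n = 0)
    (hcond : ∀ m : ℕ, 1 ≤ m → ∀ τ' : Ω → ℕ∞,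
      (∀ n : ℕ, MeasurableSet[ℱ n] {ω | τ' ω ≤ (n : ℕ∞)}) →
      ∀ s : Set Ω, MeasurableSet[ℱ (m - 1)] s → s ⊆ {ω | (m : ℕ∞) ≤ τ' ω} →
        ∫⁻ ω in s, (if τ' ω = ⊤ then 0 else E m (τ' ω).toNat ω) ∂P ≤ P s)
    (M : ℕ → Ω → ℝ≥0∞)
    (hM : ∀ n ω, M n ω = ∑ m ∈ Finset.Icc 1 n, E m n ω)
    (τ' : Ω → ℕ∞) (hτ' : ∀ n : ℕ, MeasurableSet[ℱ n] {ω | τ' ω ≤ (n : ℕ∞)}) :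
    ∫⁻ ω, (if τ' ω = ⊤ then 0 else M (τ' ω).toNat ω) ∂P ≤ ∫⁻ ω, (τ' ω : ℝ≥0∞) ∂P := by
  classical
  -- the stopped value of the m-th restarted e-process
  set F : ℕ → Ω → ℝ≥0∞ := fun m ω => if τ' ω = ⊤ then 0 else E m (τ' ω).toNat ω with hF
  set G : ℕ → Ω → ℝ≥0∞ := fun m ω => if 1 ≤ m then F m ω else 0 with hG
  -- measurability of the level sets of τ'
  have hle : ∀ n : ℕ, MeasurableSet[m0] {ω | τ' ω ≤ (n : ℕ∞)} := fun n => ℱ.le n _ (hτ' n)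
  have hset : ∀ n : ℕ, MeasurableSet[m0] {ω | τ' ω = (n : ℕ∞)} := by
    intro n
    cases n with
    | zero =>
      have : {ω | τ' ω = ((0 : ℕ) : ℕ∞)} = {ω | τ' ω ≤ ((0 : ℕ) : ℕ∞)} := by
        ext ω; simp [Nat.cast_zero, nonpos_iff_eq_zero]
      rw [this]; exact hle 0
    | succ k =>
      have : {ω | τ' ω = ((k + 1 : ℕ) : ℕ∞)}
          = {ω | τ' ω ≤ ((k + 1 : ℕ) : ℕ∞)} \ {ω | τ' ω ≤ ((k : ℕ) : ℕ∞)} := by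
        ext ω
        cases h : τ' ω with
        | top =>
          simp only [Set.mem_setOf_eq, Set.mem_diff, h]
          constructor
          · intro hc; exact absurd hc.symm (ENat.coe_ne_top (k+1))
          · intro hc; exact absurd (top_le_iff.mp hc.1) (ENat.coe_ne_top (k+1))
        | coe j =>
          simp only [h, Set.mem_setOf_eq, Set.mem_diff, Nat.cast_le, Nat.cast_inj]
          omega
      rw [this]; exact (hle (k + 1)).diff (hle k)
  -- measurability of F m for m ≥ 1
  have hFmeas : ∀ m : ℕ, 1 ≤ m → Measurable (F m) := by
    intro m hm
    have hrep : F m = fun ω => ∑' n : ℕ, Set.indicator {ω | τ' ω = (n : ℕ∞)} (E m n) ω := by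
      funext ω
      cases h : τ' ω with
      | top =>
        have : ∀ n : ℕ, Set.indicator {ω | τ' ω = (n : ℕ∞)} (E m n) ω = 0 := by
          intro n
          apply Set.indicator_of_notMem
          simp [h]
        simp [hF, h, this]
      | coe k =>
        have h1 : Set.indicator {ω | τ' ω = ((k : ℕ) : ℕ∞)} (E m k) ω = E m k ω := by
          apply Set.indicator_of_mem
          simp [h]
        have h2 : ∀ n : ℕ, n ≠ k → Set.indicator {ω | τ' ω = (n : ℕ∞)} (E m n) ω = 0 := by
          intro n hn
          apply Set.indicator_of_notMem
          simp only [Set.mem_setOf_eq, h, Nat.cast_inj]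
          omega
        rw [tsum_eq_single k h2, h1]
        simp only [hF, h]
        rw [if_neg (by exact_mod_cast ENat.coe_ne_top k)]
        rfl
    rw [hrep]
    exact Measurable.ennreal_tsum fun n =>
      ((hadapted m n hm).le (ℱ.le n)).indicator (hset n)
  -- pointwise: the integrand equals the tsum of G m
  have hpt : ∀ ω, (if τ' ω = ⊤ then 0 else M (τ' ω).toNat ω) = ∑' m : ℕ, G m ω := by
    intro ω
    cases h : τ' ω with
    | top =>
      simp [hG, hF, h]
    | coe k =>
      rw [if_neg (ENat.coe_ne_top k)]
      have htoNat : ((k : ℕ∞)).toNat = k := ENat.toNat_coe k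
      rw [htoNat, hM k ω]
      have hG' : ∀ m : ℕ, G m ω = if 1 ≤ m then E m k ω else 0 := by
        intro m
        by_cases hm : 1 ≤ m
        · simp only [hG, hF, if_pos hm, h, if_neg (ENat.coe_ne_top k), htoNat]
        · simp only [hG, if_neg hm]
      rw [tsum_congr hG']
      rw [tsum_eq_sum (s := Finset.Icc 1 k) ?_]
      · apply Finset.sum_congr rfl
        intro m hmm
        simp only [Finset.mem_Icc] at hmm
        rw [if_pos hmm.1]
      · intro m hm
        simp only [Finset.mem_Icc, not_and, not_le] at hm
        by_cases h1 : 1 ≤ m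
        · rw [if_pos h1]
          have : k < m := hm h1
          rw [hzero m k h1 this]; rfl
        · rw [if_neg h1]
  -- the set where the m-th restarted process is alive
  have hsm : ∀ m : ℕ, 1 ≤ m →
      {ω | (m : ℕ∞) ≤ τ' ω} = {ω | τ' ω ≤ ((m - 1 : ℕ) : ℕ∞)}ᶜ := by
    intro m hm
    ext ω
    cases h : τ' ω with
    | top => simp [h]
    | coe j =>
      simp only [h, Set.mem_setOf_eq, Set.mem_compl_iff, Nat.cast_le]
      omega
  -- F m vanishes off {m ≤ τ'}
  have hFind : ∀ m : ℕ, 1 ≤ m →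
      F m = Set.indicator {ω | (m : ℕ∞) ≤ τ' ω} (F m) := by
    intro m hm
    funext ω
    by_cases hω : ω ∈ {ω | (m : ℕ∞) ≤ τ' ω}
    · rw [Set.indicator_of_mem hω]
    · rw [Set.indicator_of_notMem hω]
      simp only [Set.mem_setOf_eq, not_le] at hω
      cases h : τ' ω with
      | top => simp [hF, h]
      | coe j =>
        rw [h] at hω
        have : j < m := by exact_mod_cast hω
        simp only [hF, h]
        rw [if_neg (by exact_mod_cast ENat.coe_ne_top j)]
        have hz := hzero m j hm this
        show E m ((j:ℕ∞)).toNat ω = 0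
        have : ((j:ℕ∞)).toNat = j := rfl
        rw [this, hz]; rfl
  -- bound each term
  have hterm : ∀ m : ℕ, ∫⁻ ω, G m ω ∂P ≤
      if 1 ≤ m then P {ω | (m : ℕ∞) ≤ τ' ω} else 0 := by
    intro m
    by_cases hm : 1 ≤ m
    · rw [if_pos hm]
      have hmeas_s : MeasurableSet[ℱ (m - 1)] {ω | (m : ℕ∞) ≤ τ' ω} := by
        rw [hsm m hm]
        exact (hτ' (m - 1)).compl
      have hc := hcond m hm τ' hτ' {ω | (m : ℕ∞) ≤ τ' ω} hmeas_s (subset_refl _)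
      have hGF : ∀ ω, G m ω = F m ω := fun ω => if_pos hm
      calc ∫⁻ ω, G m ω ∂P = ∫⁻ ω, F m ω ∂P := by
            exact lintegral_congr hGF
        _ = ∫⁻ ω, Set.indicator {ω | (m : ℕ∞) ≤ τ' ω} (F m) ω ∂P := by
            rw [← hFind m hm]
        _ = ∫⁻ ω in {ω | (m : ℕ∞) ≤ τ' ω}, F m ω ∂P := by
            rw [lintegral_indicator]
            rw [hsm m hm]
            exact (ℱ.le (m - 1) _ (hτ' (m - 1))).compl
        _ ≤ P {ω | (m : ℕ∞) ≤ τ' ω} := hc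
    · rw [if_neg hm]
      have : ∀ ω, G m ω = 0 := fun ω => if_neg hm
      simp [lintegral_congr this]
  -- sum of probabilities is at most the expectation of τ'
  have hsum : (∑' m : ℕ, if 1 ≤ m then P {ω | (m : ℕ∞) ≤ τ' ω} else 0)
      ≤ ∫⁻ ω, (τ' ω : ℝ≥0∞) ∂P := by
    have hrw : ∀ m : ℕ, (if 1 ≤ m then P {ω | (m : ℕ∞) ≤ τ' ω} else 0)
        = ∫⁻ ω, (if 1 ≤ m then Set.indicator {ω | (m : ℕ∞) ≤ τ' ω} 1 ω else 0) ∂P := by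
      intro m
      by_cases hm : 1 ≤ m
      · simp only [if_pos hm]
        rw [lintegral_indicator]
        · simp
        · rw [hsm m hm]
          exact (ℱ.le (m - 1) _ (hτ' (m - 1))).compl
      · simp [if_neg hm]
    rw [tsum_congr hrw]
    rw [← lintegral_tsum]
    · apply lintegral_mono
      intro ω
      dsimp only
      cases h : τ' ω with
      | top => simp [h]
      | coe k =>
        have : ∀ m : ℕ, (if 1 ≤ m then Set.indicator {ω | (m : ℕ∞) ≤ τ' ω} (1 : Ω → ℝ≥0∞) ω else 0)
            = if 1 ≤ m ∧ m ≤ k then (1 : ℝ≥0∞) else 0 := by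
          intro m
          by_cases hm : 1 ≤ m
          · by_cases hmk : m ≤ k
            · rw [if_pos hm, if_pos ⟨hm, hmk⟩, Set.indicator_of_mem]
              · rfl
              · simp only [Set.mem_setOf_eq, h, Nat.cast_le]; exact hmk
            · rw [if_pos hm, if_neg (fun hc => hmk hc.2), Set.indicator_of_notMem]
              simp only [Set.mem_setOf_eq, h, Nat.cast_le]; exact hmk
          · rw [if_neg hm, if_neg (fun hc => hm hc.1)]
        refine le_trans (le_of_eq (tsum_congr this)) ?_
        rw [tsum_eq_sum (s := Finset.Icc 1 k) ?_]
        · have : ∀ m ∈ Finset.Icc 1 k, (if 1 ≤ m ∧ m ≤ k then (1 : ℝ≥0∞) else 0) = 1 := by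
            intro m hmm
            simp only [Finset.mem_Icc] at hmm
            rw [if_pos hmm]
          rw [Finset.sum_congr rfl this, Finset.sum_const, Nat.card_Icc]
          simp [h]
        · intro m hm
          simp only [Finset.mem_Icc, not_and, not_le] at hm
          rw [if_neg]
          intro hc
          exact absurd hc.2 (by omega)
    · intro m
      by_cases hm : 1 ≤ m
      · refine AEMeasurable.congr (f := Set.indicator {ω | (m : ℕ∞) ≤ τ' ω} 1) ?_ ?_
        · refine (Measurable.indicator measurable_const ?_).aemeasurable
          rw [hsm m hm]
          exact (ℱ.le (m - 1) _ (hτ' (m - 1))).compl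
        · filter_upwards with ω
          rw [if_pos hm]
      · refine AEMeasurable.congr (f := fun _ => (0 : ℝ≥0∞)) aemeasurable_const ?_
        filter_upwards with ω
        rw [if_neg hm]
  calc ∫⁻ ω, (if τ' ω = ⊤ then 0 else M (τ' ω).toNat ω) ∂P
      = ∫⁻ ω, ∑' m : ℕ, G m ω ∂P := lintegral_congr hpt
    _ = ∑' m : ℕ, ∫⁻ ω, G m ω ∂P := by
        apply lintegral_tsum
        intro m
        by_cases hm : 1 ≤ m
        · refine AEMeasurable.congr (f := F m) (hFmeas m hm).aemeasurable ?_
          filter_upwards with ω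
          exact (if_pos hm).symm
        · refine AEMeasurable.congr (f := fun _ => (0 : ℝ≥0∞)) aemeasurable_const ?_
          filter_upwards with ω
          exact (if_neg hm).symm
    _ ≤ ∑' m : ℕ, if 1 ≤ m then P {ω | (m : ℕ∞) ≤ τ' ω} else 0 :=
        ENNReal.tsum_le_tsum hterm
    _ ≤ ∫⁻ ω, (τ' ω : ℝ≥0∞) ∂P := hsum
end

section
/- Let (M_n)_{n≥1} be a nonnegative process adapted to a filtration (𝓕_n)_{n≥0} which is an e-detector, i.e. E[M_{τ′}·1_{τ′<∞}] ≤ E[τ′] for every stopping time τ′. Fix α ∈ (0,1) and define τ* = inf{n ≥ 1 : M_n ≥ 1/α} (with inf ∅ := ∞). Then E[τ*] ≥ 1/α. -/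
open MeasureTheory Set
open scoped ENNReal

lemma enat_sInf_coe_le_iff {S : Set ℕ} {n : ℕ} :
    sInf ((fun k : ℕ => (k : ℕ∞)) '' S) ≤ (n : ℕ∞) ↔ ∃ k ∈ S, k ≤ n := by
  constructor
  · intro h
    by_contra hc
    push_neg at hc
    have hlb : ((n + 1 : ℕ) : ℕ∞) ≤ sInf ((fun k : ℕ => (k : ℕ∞)) '' S) := by
      apply le_sInf
      rintro x ⟨k, hk, rfl⟩
      show ((n + 1 : ℕ) : ℕ∞) ≤ (k : ℕ∞)
      exact_mod_cast hc k hk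
    have h2 : ((n + 1 : ℕ) : ℕ∞) ≤ ((n : ℕ) : ℕ∞) := hlb.trans h
    have : n + 1 ≤ n := by exact_mod_cast h2
    omega
  · rintro ⟨k, hk, hkn⟩
    have h1 : sInf ((fun k : ℕ => (k : ℕ∞)) '' S) ≤ (k : ℕ∞) :=
      sInf_le (Set.mem_image_of_mem _ hk)
    exact h1.trans (by exact_mod_cast hkn)

lemma enat_sInf_coe_mem {S : Set ℕ} {t : ℕ}
    (h : sInf ((fun k : ℕ => (k : ℕ∞)) '' S) = (t : ℕ∞)) : t ∈ S := by
  by_contra hc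
  have hlb : ((t + 1 : ℕ) : ℕ∞) ≤ sInf ((fun k : ℕ => (k : ℕ∞)) '' S) := by
    apply le_sInf
    rintro x ⟨k, hk, rfl⟩
    show ((t + 1 : ℕ) : ℕ∞) ≤ (k : ℕ∞)
    have h1 : t ≤ k := by
      have h0 := h ▸ sInf_le (Set.mem_image_of_mem (fun k : ℕ => (k : ℕ∞)) hk)
      exact_mod_cast h0
    have h2 : t ≠ k := fun he => hc (he ▸ hk)
    exact_mod_cast by omega
  rw [h] at hlb
  have : t + 1 ≤ t := by exact_mod_cast hlb
  omega

/-- **ARL lower bound for the first threshold crossing of an e-detector;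
Proposition 2.4 of Shin–Ramdas–Rinaldo.**
Let `(M n)_{n ≥ 1}` be a nonnegative process adapted to `(ℱ n)` which is an e-detector:
`E[M_{τ'}·1_{τ' < ∞}] ≤ E[τ']` for every stopping time `τ'`. Fix `α ∈ (0,1)` and let
`τ* = inf {n ≥ 1 : M n ≥ 1/α}` (with `inf ∅ = ⊤`). Then `E[τ*] ≥ 1/α`. -/
theorem stmt3_edetector_threshold_crossing_ARL
    {Ω : Type*} {m0 : MeasurableSpace Ω} (P : Measure Ω) [IsProbabilityMeasure P]
    (ℱ : MeasureTheory.Filtration ℕ m0)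
    (M : ℕ → Ω → ℝ≥0∞)
    (hadapted : ∀ n : ℕ, Measurable[ℱ n] (M n))
    (hedet : ∀ τ' : Ω → ℕ∞, (∀ n : ℕ, MeasurableSet[ℱ n] {ω | τ' ω ≤ (n : ℕ∞)}) →
      ∫⁻ ω, (if τ' ω = ⊤ then 0 else M (τ' ω).toNat ω) ∂P ≤ ∫⁻ ω, (τ' ω : ℝ≥0∞) ∂P)
    (α : ℝ) (hα : α ∈ Set.Ioo (0 : ℝ) 1)
    (τstar : Ω → ℕ∞)
    (hτstar : ∀ ω, τstar ω =
      sInf ((fun n : ℕ => (n : ℕ∞)) ''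
        {n : ℕ | 1 ≤ n ∧ ENNReal.ofReal (1 / α) ≤ M n ω})) :
    ENNReal.ofReal (1 / α) ≤ ∫⁻ ω, (τstar ω : ℝ≥0∞) ∂P := by
  set c := ENNReal.ofReal (1 / α) with hc
  -- τstar is a stopping time
  have hset : ∀ n : ℕ, {ω | τstar ω ≤ (n : ℕ∞)}
      = ⋃ k ∈ Finset.Icc 1 n, {ω | c ≤ M k ω} := by
    intro n
    ext ω
    simp only [Set.mem_setOf_eq, Set.mem_iUnion, Finset.mem_Icc, hτstar ω,
      enat_sInf_coe_le_iff]
    constructor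
    · rintro ⟨k, ⟨hk1, hkc⟩, hkn⟩; exact ⟨k, ⟨hk1, hkn⟩, hkc⟩
    · rintro ⟨k, ⟨hk1, hkn⟩, hkc⟩; exact ⟨k, ⟨hk1, hkc⟩, hkn⟩
  have hstop : ∀ n : ℕ, MeasurableSet[ℱ n] {ω | τstar ω ≤ (n : ℕ∞)} := by
    intro n
    rw [hset n]
    refine MeasurableSet.biUnion (Finset.countable_toSet _) ?_
    intro k hk
    exact ℱ.mono (Finset.mem_Icc.mp hk).2 _
      (measurableSet_le measurable_const (hadapted k))
  -- measurability of {τstar = ⊤}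
  have hmeas_le : ∀ n : ℕ, MeasurableSet {ω | τstar ω ≤ (n : ℕ∞)} :=
    fun n => ℱ.le n _ (hstop n)
  have hmeas_top : MeasurableSet {ω | τstar ω = ⊤} := by
    have : {ω | τstar ω = ⊤} = ⋂ n : ℕ, {ω | τstar ω ≤ (n : ℕ∞)}ᶜ := by
      ext ω
      simp only [Set.mem_iInter, Set.mem_compl_iff, Set.mem_setOf_eq]
      constructor
      · intro h n hn; rw [h] at hn; exact absurd (top_le_iff.mp hn).symm (by simp)
      · intro h
        by_contra hne
        obtain ⟨n, hn⟩ := WithTop.ne_top_iff_exists.mp hne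
        exact h n (le_of_eq hn.symm)
    rw [this]
    exact MeasurableSet.iInter fun n => (hmeas_le n).compl
  -- pointwise lower bound on the e-detector value at τstar
  have hpt : ∀ ω ∈ {ω | τstar ω = ⊤}ᶜ,
      c ≤ (if τstar ω = ⊤ then 0 else M (τstar ω).toNat ω) := by
    intro ω hω
    simp only [Set.mem_compl_iff, Set.mem_setOf_eq] at hω
    rw [if_neg hω]
    obtain ⟨t, ht⟩ := WithTop.ne_top_iff_exists.mp hω
    have hmem : t ∈ {n : ℕ | 1 ≤ n ∧ c ≤ M n ω} :=
      enat_sInf_coe_mem (by rw [← hτstar ω]; exact ht.symm)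
    have htn : (τstar ω).toNat = t := by rw [← ht]; exact ENat.toNat_coe t
    rw [htn]
    exact hmem.2
  by_cases htop : P {ω | τstar ω = ⊤} = 0
  · -- a.s. finite case
    have hPs : P {ω | τstar ω = ⊤}ᶜ = 1 := by
      rw [measure_compl hmeas_top (measure_ne_top _ _), htop, measure_univ]
      simp
    calc c = c * P {ω | τstar ω = ⊤}ᶜ := by rw [hPs, mul_one]
      _ = ∫⁻ _ in {ω | τstar ω = ⊤}ᶜ, c ∂P := by rw [setLIntegral_const]
      _ ≤ ∫⁻ ω in {ω | τstar ω = ⊤}ᶜ,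
            (if τstar ω = ⊤ then 0 else M (τstar ω).toNat ω) ∂P :=
        setLIntegral_mono' hmeas_top.compl hpt
      _ ≤ ∫⁻ ω, (if τstar ω = ⊤ then 0 else M (τstar ω).toNat ω) ∂P :=
        setLIntegral_le_lintegral _ _
      _ ≤ ∫⁻ ω, (τstar ω : ℝ≥0∞) ∂P := hedet τstar hstop
  · -- positive probability of never crossing: the integral is infinite
    have : (⊤ : ℝ≥0∞) ≤ ∫⁻ ω, (τstar ω : ℝ≥0∞) ∂P := by
      calc (⊤ : ℝ≥0∞) = ⊤ * P {ω | τstar ω = ⊤} := by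
            rw [ENNReal.top_mul htop]
        _ = ∫⁻ _ in {ω | τstar ω = ⊤}, (⊤ : ℝ≥0∞) ∂P := by rw [setLIntegral_const]
        _ ≤ ∫⁻ ω in {ω | τstar ω = ⊤}, (τstar ω : ℝ≥0∞) ∂P := by
            refine setLIntegral_mono' hmeas_top ?_
            intro ω hω
            simp only [Set.mem_setOf_eq] at hω
            rw [hω]
            simp
        _ ≤ ∫⁻ ω, (τstar ω : ℝ≥0∞) ∂P := setLIntegral_le_lintegral _ _
    exact le_top.trans this
end

section
/- Fix an integer n ≥ 1, α ∈ (0, 1], and x₁, …, x_n ∈ [0,1] with empirical mean μ̂ := (1/n)·Σ_{t=1}^n x_t. Suppose W : [0,1] → [0, ∞] satisfies log W(s) ≥ sup_{λ ∈ [−1/(1−s), 1/s]} Σ_{t=1}^n (λ(x_t − s) − (λ²/2)(x_t − s)²) − 2·log n for every s ∈ [0,1]. Then the set C := {s ∈ [0,1] : W(s) < 1/α} has diameter at most 4·√(log(n/α)/n). -/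
/-!
Put `R = √(log(n/α)/n)` and `μ̂ = (∑ x_t)/n`. For `s` in the confidence set, every admissible bet
keeps the lower bound on `log W(s)` below `log(1/α)`. Since `(x_t - s)² ≤ 1`, the bet `λ = ±2R`
(admissible once `2R ≤ 1`) earns at least `±2nR(μ̂ - s) - 2 log(n/α)`, which forces
`|μ̂ - s| < 2R`. Hence the set lies in the closed ball of radius `2R` about `μ̂`; when `4R ≥ 1` the
bound is trivial because the set lies in `[0,1]`.
-/

open Set
open scoped ENNReal

theorem neg_one_le_mul_one_sub_and_mul_le_one {lam s : ℝ} (hlam : |lam| ≤ 1)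
    (hs : s ∈ Icc (0 : ℝ) 1) :
    -1 ≤ lam * (1 - s) ∧ lam * s ≤ 1 := by
  obtain ⟨hlo, hhi⟩ := abs_le.mp hlam
  obtain ⟨hs0, hs1⟩ := hs
  constructor <;> nlinarith

theorem mul_sum_sub_card_mul_le_sum_mul_sub_sq {ι : Type*} (s : Finset ι) (y : ι → ℝ)
    (hy : ∀ i ∈ s, |y i| ≤ 1) (lam : ℝ) :
    lam * ∑ i ∈ s, y i - s.card * (lam ^ 2 / 2) ≤
      ∑ i ∈ s, (lam * y i - lam ^ 2 / 2 * y i ^ 2) := by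
  have hterm : ∀ i ∈ s, lam * y i - lam ^ 2 / 2 ≤ lam * y i - lam ^ 2 / 2 * y i ^ 2 := by
    intro i hi
    have : y i ^ 2 ≤ 1 := (sq_le_one_iff_abs_le_one _).mpr (hy i hi)
    nlinarith [sq_nonneg lam]
  calc lam * ∑ i ∈ s, y i - s.card * (lam ^ 2 / 2) = ∑ i ∈ s, (lam * y i - lam ^ 2 / 2) := by
        rw [Finset.sum_sub_distrib, Finset.mul_sum, Finset.sum_const, nsmul_eq_mul]
    _ ≤ _ := Finset.sum_le_sum hterm

theorem lt_neg_log_of_ofReal_exp_lt {E α : ℝ} (hα : 0 < α)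
    (h : ENNReal.ofReal (Real.exp E) < ENNReal.ofReal (1 / α)) : E < -Real.log α := by
  rw [ENNReal.ofReal_lt_ofReal_iff (by positivity), ← Real.lt_log_iff_exp_lt (by positivity),
    one_div, Real.log_inv] at h
  exact h

theorem abs_mean_sub_lt_of_forall_lt_neg_log {n : ℕ} (hn : 1 ≤ n) {α : ℝ} (hα : α ∈ Ioc (0 : ℝ) 1)
    {x : ℕ → ℝ} (hx : ∀ t ∈ Finset.range n, x t ∈ Icc (0 : ℝ) 1) {s : ℝ} (hs : s ∈ Icc (0 : ℝ) 1)
    (hR : 2 * Real.sqrt (Real.log (n / α) / n) ≤ 1)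
    (hbet : ∀ lam : ℝ, |lam| ≤ 1 →
      (∑ t ∈ Finset.range n, (lam * (x t - s) - lam ^ 2 / 2 * (x t - s) ^ 2)) - 2 * Real.log n
        < -Real.log α) :
    |(∑ t ∈ Finset.range n, x t) / n - s| < 2 * Real.sqrt (Real.log (n / α) / n) := by
  set L := Real.log (n / α)
  set R := Real.sqrt (L / n)
  set d := (∑ t ∈ Finset.range n, x t) / n - s
  have hn0 : (0 : ℝ) < n := by exact_mod_cast hn
  have hlogα : Real.log α ≤ 0 := Real.log_nonpos hα.1.le hα.2
  have hL : L = Real.log n - Real.log α := Real.log_div hn0.ne' hα.1.ne'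
  have hL0 : 0 ≤ L := by linarith [Real.log_nonneg (show (1 : ℝ) ≤ n by exact_mod_cast hn)]
  have hR0 : 0 ≤ R := Real.sqrt_nonneg _
  have hnR : n * R ^ 2 = L := by
    rw [Real.sq_sqrt (div_nonneg hL0 hn0.le)]; field_simp
  have hsum_dev : ∑ t ∈ Finset.range n, (x t - s) = n * d := by
    rw [Finset.sum_sub_distrib, Finset.sum_const, Finset.card_range, nsmul_eq_mul, mul_sub,
      mul_div_cancel₀ _ hn0.ne']
  have hdev : ∀ t ∈ Finset.range n, |x t - s| ≤ 1 := fun t ht =>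
    abs_sub_le_iff.mpr ⟨by linarith [(hx t ht).2, hs.1], by linarith [(hx t ht).1, hs.2]⟩
  -- The loss bound closes because `2 log n - log α = 2L + log α ≤ 2L`.
  have hbet_pm : ∀ lam : ℝ, |lam| = 2 * R → lam * d < 4 * R ^ 2 := by
    intro lam hlam
    have hearn := mul_sum_sub_card_mul_le_sum_mul_sub_sq _ _ hdev lam
    rw [hsum_dev, Finset.card_range] at hearn
    have hlam_sq : lam ^ 2 = 4 * R ^ 2 := by rw [← sq_abs, hlam]; ring
    have hloss := hbet lam (hlam ▸ hR)
    have hcost : n * (lam ^ 2 / 2) = 2 * L := by rw [hlam_sq, ← hnR]; ring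
    have : n * (lam * d) < n * (4 * R ^ 2) := by
      have hswap : lam * (n * d) = n * (lam * d) := by ring
      have hgoal : n * (4 * R ^ 2) = 4 * L := by rw [← hnR]; ring
      linarith
    exact lt_of_mul_lt_mul_left this hn0.le
  have hup := hbet_pm (2 * R) (abs_of_nonneg (by positivity))
  have hdown := hbet_pm (-(2 * R)) (by rw [abs_neg, abs_of_nonneg (by positivity)])
  have : R * |d| < R * (2 * R) := by
    rcases abs_cases d with ⟨hd, -⟩ | ⟨hd, -⟩ <;> rw [hd] <;> nlinarith
  exact lt_of_mul_lt_mul_left this hR0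

/-- **width of the betting confidence set.**
Fix `n ≥ 1`, `α ∈ (0,1]`, and `x₁,…,x_n ∈ [0,1]` with empirical mean `μ̂`. Suppose the
wealth `W : [0,1] → [0,∞]` satisfies, for every `s ∈ [0,1]`,
`log W(s) ≥ sup_{λ ∈ [-1/(1-s), 1/s]} Σ_t (λ(x_t - s) - (λ²/2)(x_t - s)²) - 2 log n`
(the condition `λ ∈ [-1/(1-s), 1/s]` is expressed as `-1 ≤ λ(1-s)` and `λ·s ≤ 1`, which
handles the endpoint cases `s ∈ {0,1}` correctly).
Then the set `C = {s ∈ [0,1] : W(s) < 1/α}` has diameter at most `4·√(log(n/α)/n)`. -/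
theorem stmt7_betting_CS_width
    (n : ℕ) (hn : 1 ≤ n) (α : ℝ) (hα : α ∈ Set.Ioc (0 : ℝ) 1)
    (x : ℕ → ℝ) (hx : ∀ t ∈ Finset.range n, x t ∈ Set.Icc (0 : ℝ) 1)
    (W : ℝ → ℝ≥0∞)
    (hW : ∀ s ∈ Set.Icc (0 : ℝ) 1, ∀ lam : ℝ,
      (-1 : ℝ) ≤ lam * (1 - s) → lam * s ≤ 1 →
      ENNReal.ofReal (Real.exp
        ((∑ t ∈ Finset.range n, (lam * (x t - s) - lam ^ 2 / 2 * (x t - s) ^ 2))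
          - 2 * Real.log n)) ≤ W s) :
    Metric.diam {s ∈ Set.Icc (0 : ℝ) 1 | W s < ENNReal.ofReal (1 / α)} ≤
      4 * Real.sqrt (Real.log (n / α) / n) := by
  set R := Real.sqrt (Real.log (n / α) / n)
  by_cases hR : 1 ≤ 4 * R
  · calc Metric.diam {s ∈ Icc (0 : ℝ) 1 | W s < ENNReal.ofReal (1 / α)}
        ≤ Metric.diam (Icc (0 : ℝ) 1) :=
          Metric.diam_mono (fun s hs => hs.1) (Metric.isBounded_Icc 0 1)
      _ = 1 := by norm_num [Real.diam_Icc]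
      _ ≤ 4 * R := hR
  · have hcenter : {s ∈ Icc (0 : ℝ) 1 | W s < ENNReal.ofReal (1 / α)} ⊆
        Metric.closedBall ((∑ t ∈ Finset.range n, x t) / n) (2 * R) := by
      rintro s ⟨hs, hWs⟩
      rw [Metric.mem_closedBall, Real.dist_eq, abs_sub_comm]
      refine (abs_mean_sub_lt_of_forall_lt_neg_log hn hα hx hs (by linarith) fun lam hlam => ?_).le
      obtain ⟨hlo, hhi⟩ := neg_one_le_mul_one_sub_and_mul_le_one hlam hs
      exact lt_neg_log_of_ofReal_exp_lt hα.1 ((hW s hs lam hlo hhi).trans_lt hWs)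
    calc _ ≤ 2 * (2 * R) := Metric.diam_le_of_subset_closedBall (by positivity) hcenter
      _ = 4 * R := by ring
end

section
/- Let x₁, …, x_n ∈ [0,1] and let 0 ≤ θ ≤ θ′ < 1. Define Z_n(ϑ) := sup_{λ ∈ [0, 1/(1−ϑ)]} Σ_{t=1}^n log(1 + λ(ϑ − x_t)) (with values in the extended reals). Then Z_n(θ′) ≥ Z_n(θ). -/
open Set
open scoped ENNReal

/-- **monotonicity of the best one-sided log-wealth in the candidate mean.**
Let `x₁,…,x_n ∈ [0,1]` and `0 ≤ θ ≤ θ' < 1`. With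
`Z_n(ϑ) = sup_{λ ∈ [0, 1/(1-ϑ)]} Σ_t log(1 + λ(ϑ - x_t))` (extended-real valued, the
logarithm of a nonnegative quantity being valued in `[-∞, ∞)`), we have `Z_n(θ') ≥ Z_n(θ)`. -/
theorem stmt8_log_wealth_monotone
    (n : ℕ) (x : ℕ → ℝ) (hx : ∀ t ∈ Finset.range n, x t ∈ Set.Icc (0 : ℝ) 1)
    (θ θ' : ℝ) (hθ0 : 0 ≤ θ) (hθθ' : θ ≤ θ') (hθ'1 : θ' < 1)
    (Z : ℝ → EReal)
    (hZ : ∀ ϑ : ℝ, Z ϑ = ⨆ lam ∈ Set.Icc (0 : ℝ) (1 / (1 - ϑ)),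
      ∑ t ∈ Finset.range n, ENNReal.log (ENNReal.ofReal (1 + lam * (ϑ - x t)))) :
    Z θ ≤ Z θ' := by
  rw [hZ θ, hZ θ']
  refine iSup₂_le fun lam hlam => ?_
  have h1θ' : (0:ℝ) < 1 - θ' := by linarith
  have hlam' : lam ∈ Set.Icc (0 : ℝ) (1 / (1 - θ')) := by
    refine ⟨hlam.1, hlam.2.trans (one_div_le_one_div_of_le h1θ' (by linarith))⟩
  refine le_trans ?_ (le_iSup₂ (f := fun lam _ =>
    ∑ t ∈ Finset.range n, ENNReal.log (ENNReal.ofReal (1 + lam * (θ' - x t)))) lam hlam')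
  refine Finset.sum_le_sum fun t ht => ?_
  exact ENNReal.log_monotone (ENNReal.ofReal_le_ofReal (by nlinarith [hlam.1]))
end

section
/- Let (V_t)_{t≥1} be i.i.d. real-valued random variables with |V_t| ≤ c almost surely for some c > 0 and K := E[V₁] > 0, and let α ∈ (0,1). Define ρ* := inf{n ≥ 1 : Σ_{t=1}^n V_t ≥ log(n²/α)} and assume E[ρ*] < ∞. Then K·E[ρ*] ≤ log(1/α) + 2·log(E[ρ*]) + c. -/
/-!
Wald's identity: the event `{t < τ}` is determined by `V₀, …, V_{t-1}`, hence independent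
of `V_t`, so `E[Σ_{t<τ} V_t] = Σ_t E[V_t 1{t<τ}] = K Σ_t P(t < τ) = K E[τ]`. At the crossing
time `ρ*` the walk was still below the boundary at time `ρ* - 1`, so it overshoots by at most
one increment: `Σ_{t<ρ*} V_t ≤ log(ρ*²/α) + c`. Taking expectations and bounding
`E[log ρ*] ≤ log E[ρ*]` by Jensen's inequality gives the claim.
-/

open MeasureTheory ProbabilityTheory
open scoped ENNReal

section

variable {Ω : Type*} {m0 : MeasurableSpace Ω} {P : Measure Ω}

theorem ENat.toENNReal_eq_tsum_ite_lt (n : ℕ∞) :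
    (n : ℝ≥0∞) = ∑' t : ℕ, if (t : ℕ∞) < n then 1 else 0 := by
  induction n using ENat.recTopCoe with
  | top => simp
  | coe n =>
    rw [tsum_eq_sum (s := Finset.range n) fun t ht => by simpa using ht]
    simp [Finset.filter_true_of_mem]

theorem lintegral_enat_eq_tsum_measure_lt {τ : Ω → ℕ∞}
    (hA : ∀ t : ℕ, MeasurableSet {ω | (t : ℕ∞) < τ ω}) :
    ∫⁻ ω, (τ ω : ℝ≥0∞) ∂P = ∑' t : ℕ, P {ω | (t : ℕ∞) < τ ω} := by
  simp_rw [ENat.toENNReal_eq_tsum_ite_lt]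
  rw [lintegral_tsum fun t =>
    (Measurable.ite (hA t) measurable_const measurable_const).aemeasurable]
  refine tsum_congr fun t => ?_
  rw [← lintegral_indicator_one (hA t)]
  simp [Set.indicator_apply]

theorem ProbabilityTheory.Indep.setLIntegral_comp_eq_mul {β : Type*} [MeasurableSpace β]
    {X : Ω → β} (hX : Measurable X) {m : MeasurableSpace Ω} (hm : m ≤ m0)
    (hind : Indep m (MeasurableSpace.comap X inferInstance) P) {A : Set Ω}
    (hA : MeasurableSet[m] A) {f : β → ℝ≥0∞} (hf : Measurable f) :
    ∫⁻ ω in A, f (X ω) ∂P = P A * ∫⁻ ω, f (X ω) ∂P := by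
  rw [← lintegral_indicator (hm A hA), ← lintegral_indicator_one (hm A hA),
    ← lintegral_mul_eq_lintegral_mul_lintegral_of_independent_measurableSpace
      (g := fun ω => f (X ω)) hm hX.comap_le hind (measurable_one.indicator hA)
      (hf.comp (comap_measurable X))]
  congr with ω
  by_cases hω : ω ∈ A <;> simp [hω]

theorem ENat.toReal_toENNReal (n : ℕ∞) : (n : ℝ≥0∞).toReal = n.toNat := by
  induction n using ENat.recTopCoe <;> simp

namespace MeasureTheory.IsStoppingTime

variable {ℱ : Filtration ℕ m0} {τ : Ω → ℕ∞}

-- `hτ.measurableSet_gt` is stated with the order of `WithTop ℕ`; this is its `ℕ∞` form.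
theorem measurableSet_natCast_lt (hτ : IsStoppingTime ℱ τ) (t : ℕ) :
    MeasurableSet[ℱ t] {ω | (t : ℕ∞) < τ ω} :=
  hτ.measurableSet_gt t

theorem measurable_toENNReal (hτ : IsStoppingTime ℱ τ) : Measurable fun ω => (τ ω : ℝ≥0∞) :=
  (Measurable.of_discrete (α := WithTop ℕ)).comp hτ.measurable'

theorem measurable_toNat (hτ : IsStoppingTime ℱ τ) : Measurable fun ω => (τ ω).toNat :=
  (Measurable.of_discrete (α := WithTop ℕ) (f := ENat.toNat)).comp hτ.measurable'

theorem ae_ne_top (hτ : IsStoppingTime ℱ τ) (hfin : ∫⁻ ω, (τ ω : ℝ≥0∞) ∂P ≠ ⊤) :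
    ∀ᵐ ω ∂P, τ ω ≠ ⊤ := by
  filter_upwards [ae_lt_top hτ.measurable_toENNReal hfin] with ω hω
  simpa using hω.ne

theorem integrable_toNat (hτ : IsStoppingTime ℱ τ) (hfin : ∫⁻ ω, (τ ω : ℝ≥0∞) ∂P ≠ ⊤) :
    Integrable (fun ω => ((τ ω).toNat : ℝ)) P := by
  simpa only [ENat.toReal_toENNReal] using
    integrable_toReal_of_lintegral_ne_top hτ.measurable_toENNReal.aemeasurable hfin

theorem integral_toNat (hτ : IsStoppingTime ℱ τ) (hfin : ∫⁻ ω, (τ ω : ℝ≥0∞) ∂P ≠ ⊤) :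
    ∫ ω, ((τ ω).toNat : ℝ) ∂P = (∫⁻ ω, (τ ω : ℝ≥0∞) ∂P).toReal := by
  simpa only [ENat.toReal_toENNReal] using
    integral_toReal hτ.measurable_toENNReal.aemeasurable (ae_lt_top hτ.measurable_toENNReal hfin)

end MeasureTheory.IsStoppingTime

theorem tsum_setLIntegral_lt_stoppingTime {β : Type*} [MeasurableSpace β]
    {ℱ : Filtration ℕ m0} {τ : Ω → ℕ∞} (hτ : IsStoppingTime ℱ τ) {X : ℕ → Ω → β}
    (hX : ∀ t, Measurable (X t))
    (hindep : ∀ t, Indep (ℱ t) (MeasurableSpace.comap (X t) inferInstance) P)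
    (hident : ∀ t, IdentDistrib (X t) (X 0) P P) {f : β → ℝ≥0∞} (hf : Measurable f) :
    ∑' t : ℕ, ∫⁻ ω in {ω | (t : ℕ∞) < τ ω}, f (X t ω) ∂P =
      (∫⁻ ω, (τ ω : ℝ≥0∞) ∂P) * ∫⁻ ω, f (X 0 ω) ∂P := by
  rw [lintegral_enat_eq_tsum_measure_lt fun t => ℱ.le t _ (hτ.measurableSet_natCast_lt t),
    ← ENNReal.tsum_mul_right]
  refine tsum_congr fun t => ?_
  rw [(hindep t).setLIntegral_comp_eq_mul (hX t) (ℱ.le t) (hτ.measurableSet_natCast_lt t) hf]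
  exact congrArg _ ((hident t).comp hf).lintegral_eq

section Wald

variable {ℱ : Filtration ℕ m0} {τ : Ω → ℕ∞} {V : ℕ → Ω → ℝ}

theorem tsum_lintegral_enorm_indicator_lt_stoppingTime_ne_top (hτ : IsStoppingTime ℱ τ)
    (hV : ∀ t, Measurable (V t))
    (hindep : ∀ t, Indep (ℱ t) (MeasurableSpace.comap (V t) inferInstance) P)
    (hident : ∀ t, IdentDistrib (V t) (V 0) P P) (hint : Integrable (V 0) P)
    (hfin : ∫⁻ ω, (τ ω : ℝ≥0∞) ∂P ≠ ⊤) :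
    ∑' t : ℕ, ∫⁻ ω, ‖{ω | (t : ℕ∞) < τ ω}.indicator (V t) ω‖ₑ ∂P ≠ ⊤ := by
  have hA (t : ℕ) := ℱ.le t _ (hτ.measurableSet_natCast_lt t)
  simp only [enorm_indicator_eq_indicator_enorm, lintegral_indicator (hA _)]
  rw [tsum_setLIntegral_lt_stoppingTime hτ hV hindep hident measurable_enorm]
  exact ENNReal.mul_ne_top hfin hint.hasFiniteIntegral.ne

theorem integrable_sum_range_toNat_stoppingTime (hτ : IsStoppingTime ℱ τ)
    (hV : ∀ t, Measurable (V t))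
    (hindep : ∀ t, Indep (ℱ t) (MeasurableSpace.comap (V t) inferInstance) P)
    (hident : ∀ t, IdentDistrib (V t) (V 0) P P) (hint : Integrable (V 0) P)
    (hfin : ∫⁻ ω, (τ ω : ℝ≥0∞) ∂P ≠ ⊤) :
    Integrable (fun ω => ∑ t ∈ Finset.range (τ ω).toNat, V t ω) P := by
  have hsum : Measurable fun p : Ω × ℕ => ∑ t ∈ Finset.range p.2, V t p.1 :=
    measurable_from_prod_countable_left fun n =>
      Finset.measurable_sum (Finset.range n) fun t _ => hV t
  refine ⟨(hsum.comp (measurable_id.prodMk hτ.measurable_toNat)).aestronglyMeasurable, ?_⟩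
  have hle (ω : Ω) : ‖∑ t ∈ Finset.range (τ ω).toNat, V t ω‖ₑ ≤
      ∑' t : ℕ, ‖{ω | (t : ℕ∞) < τ ω}.indicator (V t) ω‖ₑ := by
    refine (enorm_sum_le _ _).trans (le_of_eq_of_le (Finset.sum_congr rfl fun t ht => ?_)
      (ENNReal.sum_le_tsum _))
    have : (t : ℕ∞) < τ ω := by
      rw [Finset.mem_range] at ht
      revert ht
      induction τ ω using ENat.recTopCoe <;> simp
    rw [Set.indicator_of_mem (s := {ω | (t : ℕ∞) < τ ω}) this]
  refine (lintegral_mono hle).trans_lt (lt_top_iff_ne_top.2 ?_)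
  rw [lintegral_tsum fun t =>
    ((hV t).indicator (ℱ.le t _ (hτ.measurableSet_natCast_lt t))).enorm.aemeasurable]
  exact tsum_lintegral_enorm_indicator_lt_stoppingTime_ne_top hτ hV hindep hident hint hfin

theorem integral_sum_range_toNat_stoppingTime [IsFiniteMeasure P] (hτ : IsStoppingTime ℱ τ)
    (hV : ∀ t, Measurable (V t))
    (hindep : ∀ t, Indep (ℱ t) (MeasurableSpace.comap (V t) inferInstance) P)
    (hident : ∀ t, IdentDistrib (V t) (V 0) P P) (hint : Integrable (V 0) P)
    (hfin : ∫⁻ ω, (τ ω : ℝ≥0∞) ∂P ≠ ⊤) :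
    ∫ ω, ∑ t ∈ Finset.range (τ ω).toNat, V t ω ∂P =
      (∫ ω, V 0 ω ∂P) * (∫⁻ ω, (τ ω : ℝ≥0∞) ∂P).toReal := by
  have hA (t : ℕ) := ℱ.le t _ (hτ.measurableSet_natCast_lt t)
  have hsum : ∀ᵐ ω ∂P, ∑ t ∈ Finset.range (τ ω).toNat, V t ω =
      ∑' t : ℕ, {ω | (t : ℕ∞) < τ ω}.indicator (V t) ω := by
    filter_upwards [hτ.ae_ne_top hfin] with ω hω
    have hlt (t : ℕ) : (t : ℕ∞) < τ ω ↔ t ∈ Finset.range (τ ω).toNat := by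
      lift τ ω to ℕ using hω with n
      simp
    rw [tsum_eq_sum (s := Finset.range (τ ω).toNat) fun t ht =>
      Set.indicator_of_notMem (s := {ω | (t : ℕ∞) < τ ω}) (by simpa [hlt] using ht) _]
    exact Finset.sum_congr rfl fun t ht =>
      (Set.indicator_of_mem (s := {ω | (t : ℕ∞) < τ ω}) ((hlt t).2 ht) _).symm
  calc ∫ ω, ∑ t ∈ Finset.range (τ ω).toNat, V t ω ∂P
      = ∫ ω, ∑' t : ℕ, {ω | (t : ℕ∞) < τ ω}.indicator (V t) ω ∂P := integral_congr_ae hsum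
    _ = ∑' t : ℕ, ∫ ω, {ω | (t : ℕ∞) < τ ω}.indicator (V t) ω ∂P :=
      integral_tsum (fun t => ((hV t).indicator (hA t)).aestronglyMeasurable)
        (tsum_lintegral_enorm_indicator_lt_stoppingTime_ne_top hτ hV hindep hident hint hfin)
    _ = ∑' t : ℕ, P.real {ω | (t : ℕ∞) < τ ω} * ∫ ω, V 0 ω ∂P := tsum_congr fun t => by
      rw [integral_indicator (hA t), ← (hident t).integral_eq]
      exact (hindep t).setIntegral_eq_mul (f := id) (ℱ.le t) (hV t).aemeasurable
        (hτ.measurableSet_natCast_lt t) aestronglyMeasurable_id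
    _ = (∫ ω, V 0 ω ∂P) * (∫⁻ ω, (τ ω : ℝ≥0∞) ∂P).toReal := by
      rw [tsum_mul_right, mul_comm, lintegral_enat_eq_tsum_measure_lt hA,
        ENNReal.tsum_toReal_eq fun t => measure_ne_top P _]
      rfl

end Wald

theorem MeasureTheory.Integrable.log_of_one_le {f : Ω → ℝ} (hf : Integrable f P)
    (h1 : ∀ᵐ ω ∂P, 1 ≤ f ω) : Integrable (fun ω => Real.log (f ω)) P := by
  refine hf.mono' hf.aemeasurable.log.aestronglyMeasurable ?_
  filter_upwards [h1] with ω hω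
  rw [Real.norm_of_nonneg (Real.log_nonneg hω)]
  exact Real.log_le_self (by linarith)

theorem integral_log_le_log_integral [IsProbabilityMeasure P] {f : Ω → ℝ} (hf : Integrable f P)
    (h1 : ∀ᵐ ω ∂P, 1 ≤ f ω) : ∫ ω, Real.log (f ω) ∂P ≤ Real.log (∫ ω, f ω ∂P) :=
  (strictConcaveOn_log_Ioi.concaveOn.subset (Set.Ici_subset_Ioi.2 one_pos)
    (convex_Ici 1)).le_map_integral
    (Real.continuousOn_log.mono fun _ hx => (one_pos.trans_le hx).ne') isClosed_Ici h1 hf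
    (hf.log_of_one_le h1)

def partialSumFiltration (V : ℕ → Ω → ℝ) (hV : ∀ t, Measurable (V t)) : Filtration ℕ m0 :=
  Filtration.natural (fun n ω => ∑ t ∈ Finset.range n, V t ω) fun n =>
    (Finset.measurable_sum (Finset.range n) fun t _ => hV t).stronglyMeasurable

theorem indep_partialSumFiltration {V : ℕ → Ω → ℝ} (hV : ∀ t, Measurable (V t))
    (hindep : iIndepFun V P) (t : ℕ) :
    Indep (partialSumFiltration V hV t) (MeasurableSpace.comap (V t) inferInstance) P := by
  have h := indep_iSup_of_disjoint (fun i => (hV i).comap_le)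
    ((iIndepFun_iff_iIndep _ _ _).1 hindep) (S := Set.Iio t) (T := {t}) (by simp)
  rw [iSup_singleton] at h
  refine indep_of_indep_of_le_left h (iSup₂_le fun j hj => measurable_iff_comap_le.1 ?_)
  exact Finset.measurable_sum _ fun i hi => (comap_measurable (V i)).mono
    (le_iSup₂ (f := fun i (_ : i ∈ Set.Iio t) => MeasurableSpace.comap (V i) inferInstance) i
      (lt_of_lt_of_le (Finset.mem_range.1 hi) hj)) le_rfl

noncomputable def crossingTime (V : ℕ → Ω → ℝ) (b : ℕ → ℝ) : Ω → ℕ∞ :=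
  hittingAfter (fun n ω => ∑ t ∈ Finset.range n, V t ω - b n) (Set.Ici 0) 1

section crossingTime

variable {V : ℕ → Ω → ℝ} {b : ℕ → ℝ}

theorem crossingTime_eq_sInf (ω : Ω) :
    crossingTime V b ω =
      sInf ((fun n : ℕ => (n : ℕ∞)) '' {n : ℕ | 1 ≤ n ∧ b n ≤ ∑ t ∈ Finset.range n, V t ω}) := by
  classical
  simp only [crossingTime, hittingAfter, Set.mem_Ici, sub_nonneg]
  split_ifs with h
  · exact (ENat.natCast_sInf h).trans sInf_image.symm
  · refine Eq.symm (sInf_eq_top.2 ?_)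
    rintro _ ⟨n, hn, rfl⟩
    exact absurd ⟨n, hn⟩ h

theorem isStoppingTime_crossingTime (hV : ∀ t, Measurable (V t)) :
    IsStoppingTime (partialSumFiltration V hV) (crossingTime V b) :=
  Adapted.isStoppingTime_hittingAfter
    (fun n => ((Filtration.stronglyAdapted_natural
      (u := fun n ω => ∑ t ∈ Finset.range n, V t ω) _ n).measurable).sub_const (b n))
    measurableSet_Ici

theorem one_le_toNat_crossingTime {ω : Ω} (hω : crossingTime V b ω ≠ ⊤) :
    1 ≤ (crossingTime V b ω).toNat := by
  have h : (1 : ℕ∞) ≤ crossingTime V b ω := le_hittingAfter ω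
  rw [← ENat.natCast_toNat hω] at h
  exact_mod_cast h

theorem sum_range_toNat_crossingTime_le (hb : Monotone b) (hb0 : 0 ≤ b 0) {c : ℝ} {ω : Ω}
    (hc : ∀ t, V t ω ≤ c) (hω : crossingTime V b ω ≠ ⊤) :
    ∑ t ∈ Finset.range (crossingTime V b ω).toNat, V t ω ≤
      b (crossingTime V b ω).toNat + c := by
  obtain ⟨m, hm⟩ := Nat.exists_eq_add_of_le' (one_le_toNat_crossingTime hω)
  have hbelow : ∑ t ∈ Finset.range m, V t ω ≤ b m := by
    rcases Nat.eq_zero_or_pos m with rfl | hm0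
    · simpa using hb0
    have hlt : (m : ℕ∞) < crossingTime V b ω := by
      rw [← ENat.natCast_toNat hω, hm]
      exact_mod_cast Nat.lt_succ_self m
    have := notMem_of_lt_hittingAfter hlt hm0
    simp only [Set.mem_Ici, sub_nonneg, not_le] at this
    exact this.le
  rw [hm, Finset.sum_range_succ]
  linarith [hb (Nat.le_succ m), hc m]

end crossingTime

theorem monotone_log_natCast_sq_div {α : ℝ} (hα0 : 0 < α) (hα1 : α ≤ 1) :
    Monotone fun n : ℕ => Real.log ((n : ℝ) ^ 2 / α) := by
  refine monotone_nat_of_le_succ fun n => ?_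
  rcases Nat.eq_zero_or_pos n with rfl | hn
  -- at `n = 0` the junk value `Real.log 0 = 0` is compared with `Real.log (1 / α) ≥ 0`
  · simpa using Real.log_nonneg (one_le_inv_iff₀.2 ⟨hα0, hα1⟩)
  · exact Real.log_le_log (by positivity) (by gcongr; simp)

theorem integral_mul_lintegral_crossingTime_le [IsProbabilityMeasure P] {V : ℕ → Ω → ℝ}
    {b : ℕ → ℝ} {c : ℝ} (hV : ∀ t, Measurable (V t)) (hindep : iIndepFun V P)
    (hident : ∀ t, IdentDistrib (V t) (V 0) P P) (hbdd : ∀ t, ∀ᵐ ω ∂P, |V t ω| ≤ c)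
    (hb : Monotone b) (hb0 : 0 ≤ b 0)
    (hbint : Integrable (fun ω => b (crossingTime V b ω).toNat) P)
    (hfin : ∫⁻ ω, (crossingTime V b ω : ℝ≥0∞) ∂P ≠ ⊤) :
    (∫ ω, V 0 ω ∂P) * (∫⁻ ω, (crossingTime V b ω : ℝ≥0∞) ∂P).toReal ≤
      ∫ ω, b (crossingTime V b ω).toNat ∂P + c := by
  have hτ := isStoppingTime_crossingTime (b := b) hV
  have hindep' := indep_partialSumFiltration hV hindep
  have hint : Integrable (V 0) P := .of_bound (hV 0).aestronglyMeasurable c (hbdd 0)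
  have hover : ∀ᵐ ω ∂P, ∑ t ∈ Finset.range (crossingTime V b ω).toNat, V t ω ≤
      b (crossingTime V b ω).toNat + c := by
    filter_upwards [hτ.ae_ne_top hfin, ae_all_iff.2 hbdd] with ω hω hc
    exact sum_range_toNat_crossingTime_le hb hb0 (fun t => (le_abs_self _).trans (hc t)) hω
  calc (∫ ω, V 0 ω ∂P) * (∫⁻ ω, (crossingTime V b ω : ℝ≥0∞) ∂P).toReal
      = ∫ ω, ∑ t ∈ Finset.range (crossingTime V b ω).toNat, V t ω ∂P :=
        (integral_sum_range_toNat_stoppingTime hτ hV hindep' hident hint hfin).symm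
    _ ≤ ∫ ω, (b (crossingTime V b ω).toNat + c) ∂P :=
        integral_mono_ae (integrable_sum_range_toNat_stoppingTime hτ hV hindep' hident hint hfin)
          (hbint.add (integrable_const c)) hover
    _ = ∫ ω, b (crossingTime V b ω).toNat ∂P + c := by
        rw [integral_add hbint (integrable_const c)]
        simp
end

theorem stmt10_oracle_stopping_time_wald_bound_general
    {Ω : Type*} {m0 : MeasurableSpace Ω} (P : Measure Ω) [IsProbabilityMeasure P]
    (V : ℕ → Ω → ℝ) (hVmeas : ∀ t, Measurable (V t))
    (hiid_indep : ProbabilityTheory.iIndepFun V P)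
    (hiid_ident : ∀ t, ProbabilityTheory.IdentDistrib (V t) (V 0) P P)
    (c : ℝ) (hbdd : ∀ t, ∀ᵐ ω ∂P, |V t ω| ≤ c)
    (K : ℝ) (hK : K = ∫ ω, V 0 ω ∂P)
    (α : ℝ) (hα : α ∈ Set.Ioo (0 : ℝ) 1)
    (ρ : Ω → ℕ∞)
    (hρ : ∀ ω, ρ ω =
      sInf ((fun n : ℕ => (n : ℕ∞)) ''
        {n : ℕ | 1 ≤ n ∧ Real.log ((n : ℝ) ^ 2 / α) ≤ ∑ t ∈ Finset.range n, V t ω}))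
    (hfin : ∫⁻ ω, (ρ ω : ℝ≥0∞) ∂P < ⊤) :
    K * (∫⁻ ω, (ρ ω : ℝ≥0∞) ∂P).toReal ≤
      Real.log (1 / α) + 2 * Real.log (∫⁻ ω, (ρ ω : ℝ≥0∞) ∂P).toReal + c := by
  obtain ⟨hα0, hα1⟩ := hα
  set b : ℕ → ℝ := fun n => Real.log ((n : ℝ) ^ 2 / α)
  obtain rfl : ρ = crossingTime V b :=
    funext fun ω => (hρ ω).trans (crossingTime_eq_sInf ω).symm
  have hτ := isStoppingTime_crossingTime (b := b) hVmeas
  have hN := hτ.integrable_toNat hfin.ne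
  have hN1 : ∀ᵐ ω ∂P, (1 : ℝ) ≤ (crossingTime V b ω).toNat :=
    (hτ.ae_ne_top hfin.ne).mono fun ω hω => by exact_mod_cast one_le_toNat_crossingTime hω
  have hb : ∀ᵐ ω ∂P, b (crossingTime V b ω).toNat =
      2 * Real.log (crossingTime V b ω).toNat + Real.log (1 / α) := by
    filter_upwards [hN1] with ω hω
    simp only [b]
    rw [Real.log_div (pow_pos (by linarith) 2).ne' hα0.ne', Real.log_pow, one_div, Real.log_inv]
    push_cast
    ring
  have hlogN := (hN.log_of_one_le hN1).const_mul 2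
  calc K * (∫⁻ ω, (crossingTime V b ω : ℝ≥0∞) ∂P).toReal
      ≤ ∫ ω, b (crossingTime V b ω).toNat ∂P + c :=
        hK ▸ integral_mul_lintegral_crossingTime_le hVmeas hiid_indep hiid_ident hbdd
          (monotone_log_natCast_sq_div hα0 hα1.le) (by simp [b])
          ((hlogN.add (integrable_const _)).congr (hb.mono fun ω h => h.symm)) hfin.ne
    _ = 2 * ∫ ω, Real.log (crossingTime V b ω).toNat ∂P + Real.log (1 / α) + c := by
        rw [integral_congr_ae hb, integral_add hlogN (integrable_const _), integral_const_mul]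
        simp
    _ ≤ 2 * Real.log (∫ ω, ((crossingTime V b ω).toNat : ℝ) ∂P) + Real.log (1 / α) + c := by
        gcongr
        exact integral_log_le_log_integral hN hN1
    _ = _ := by rw [hτ.integral_toNat hfin.ne]; ring

/-- **Wald bound for the oracle stopping time.**
Let `(V t)_{t ≥ 1}` be i.i.d. real random variables (indexed by `t : ℕ`, `V t` being the
`(t+1)`-st variable, so `Σ_{t=1}^n V_t = Σ_{t ∈ range n} V t`), with `|V t| ≤ c` a.s. for some
`c > 0` and `K = E[V₁] > 0`, and let `α ∈ (0,1)`. Define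
`ρ* = inf {n ≥ 1 : Σ_{t=1}^n V_t ≥ log(n²/α)}` and assume `E[ρ*] < ∞`. Then
`K·E[ρ*] ≤ log(1/α) + 2·log(E[ρ*]) + c`. -/
theorem stmt10_oracle_stopping_time_wald_bound
    {Ω : Type*} {m0 : MeasurableSpace Ω} (P : Measure Ω) [IsProbabilityMeasure P]
    (V : ℕ → Ω → ℝ) (hVmeas : ∀ t, Measurable (V t))
    (hiid_indep : ProbabilityTheory.iIndepFun V P)
    (hiid_ident : ∀ t, ProbabilityTheory.IdentDistrib (V t) (V 0) P P)
    (c : ℝ) (hc : 0 < c) (hbdd : ∀ t, ∀ᵐ ω ∂P, |V t ω| ≤ c)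
    (K : ℝ) (hK : K = ∫ ω, V 0 ω ∂P) (hKpos : 0 < K)
    (α : ℝ) (hα : α ∈ Set.Ioo (0 : ℝ) 1)
    (ρ : Ω → ℕ∞)
    (hρ : ∀ ω, ρ ω =
      sInf ((fun n : ℕ => (n : ℕ∞)) ''
        {n : ℕ | 1 ≤ n ∧ Real.log ((n : ℝ) ^ 2 / α) ≤ ∑ t ∈ Finset.range n, V t ω}))
    (hfin : ∫⁻ ω, (ρ ω : ℝ≥0∞) ∂P < ⊤) :
    K * (∫⁻ ω, (ρ ω : ℝ≥0∞) ∂P).toReal ≤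
      Real.log (1 / α) + 2 * Real.log (∫⁻ ω, (ρ ω : ℝ≥0∞) ∂P).toReal + c :=
  stmt10_oracle_stopping_time_wald_bound_general (m0 := m0) P V hVmeas hiid_indep hiid_ident c hbdd
    K hK α hα ρ hρ hfin
end

section
/- Let Θ be a set, θ₀ ∈ Θ, and for every pair of integers 1 ≤ m ≤ n′ let C_{n′}^{(m)} ⊆ Θ be an arbitrary subset. For each m ≥ 1 define N^{(m)} := inf{n′ − m + 1 : n′ ≥ m and θ₀ ∉ C_{n′}^{(m)}} ∈ ℕ ∪ {∞}, and define N* := inf_{m ≥ 1} (N^{(m)} + m − 1). Define τ := inf{n ≥ 1 : {θ₀} ∩ ⋂_{m=1}^n ⋂_{n′=m}^n C_{n′}^{(m)} = ∅}. Then N* = τ. -/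
/-!
An element of `ℕ∞` is determined by the naturals `n` it lies below, so it suffices to show that
`N* ≤ n` and `τ ≤ n` are both equivalent to: some test started at a time `m ≥ 1` has rejected
`θ₀` at a time `n'` with `m ≤ n' ≤ n`. For `N*` this holds because the infimum of the shifted
stopping times `N m + m - 1` is attained in the well-order `ℕ∞`; for `τ` because the
intersection over the triangle `1 ≤ m ≤ n' ≤ n` misses `θ₀` exactly when one of its sets does.
-/

namespace ENat

lemma eq_of_forall_le_natCast_iff {a b : ℕ∞} (h : ∀ n : ℕ, a ≤ n ↔ b ≤ n) : a = b := by
  refine le_antisymm ?_ ?_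
  · induction b using ENat.recTopCoe with
    | top => exact le_top
    | coe k => exact (h k).2 le_rfl
  · induction a using ENat.recTopCoe with
    | top => exact le_top
    | coe k => exact (h k).1 le_rfl

lemma iInf_le_natCast_iff {ι : Sort*} {f : ι → ℕ∞} {n : ℕ} : ⨅ i, f i ≤ n ↔ ∃ i, f i ≤ n := by
  simp only [← lt_add_one_iff (natCast_ne_top n), iInf_lt_iff]

lemma sInf_image_natCast_le_natCast_iff {S : Set ℕ} {n : ℕ} :
    sInf ((↑) '' S : Set ℕ∞) ≤ n ↔ ∃ k ∈ S, k ≤ n := by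
  simp only [sInf_image, iInf_le_natCast_iff, Nat.cast_le, exists_prop]

lemma add_natCast_sub_one_le_natCast_iff {a : ℕ∞} {m n : ℕ} (ha : a ≠ 0) :
    a + m - 1 ≤ n ↔ a ≤ (n + 1 - m : ℕ) := by
  induction a using ENat.recTopCoe with
  | top => simp
  | coe k =>
    rw [← Nat.cast_add, ← Nat.cast_one (R := ℕ∞), ← ENat.natCast_sub, Nat.cast_le, Nat.cast_le]
    have : k ≠ 0 := by exact_mod_cast ha
    omega

end ENat

section RepeatedTests

variable (R : ℕ → ℕ → Prop) {N : ℕ → ℕ∞}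

lemma restartedTest_le_iff
    (hN : ∀ m : ℕ, N m = sInf ((fun k : ℕ => (k : ℕ∞)) ''
        {k : ℕ | ∃ n' : ℕ, m ≤ n' ∧ R m n' ∧ k = n' - m + 1}))
    (m n : ℕ) :
    N m + m - 1 ≤ n ↔ ∃ n', m ≤ n' ∧ n' ≤ n ∧ R m n' := by
  have hN_ne_zero : N m ≠ 0 := fun h => by
    obtain ⟨_, ⟨n', -, -, rfl⟩, hle⟩ :=
      ENat.sInf_image_natCast_le_natCast_iff.1 (hN m ▸ h.le : _ ≤ ((0 : ℕ) : ℕ∞))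
    omega
  rw [ENat.add_natCast_sub_one_le_natCast_iff hN_ne_zero, hN,
    ENat.sInf_image_natCast_le_natCast_iff]
  constructor
  · rintro ⟨_, ⟨n', hmn', hR, rfl⟩, hle⟩
    exact ⟨n', hmn', by omega, hR⟩
  · rintro ⟨n', hmn', hn'n, hR⟩
    exact ⟨_, ⟨n', hmn', hR, rfl⟩, by omega⟩

lemma lordenTime_le_iff
    (hN : ∀ m : ℕ, N m = sInf ((fun k : ℕ => (k : ℕ∞)) ''
        {k : ℕ | ∃ n' : ℕ, m ≤ n' ∧ R m n' ∧ k = n' - m + 1}))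
    (n : ℕ) :
    ⨅ m ∈ {m : ℕ | 1 ≤ m}, N m + (m : ℕ∞) - 1 ≤ n ↔
      ∃ m, 1 ≤ m ∧ ∃ n', m ≤ n' ∧ n' ≤ n ∧ R m n' := by
  simp only [ENat.iInf_le_natCast_iff, restartedTest_le_iff R hN, exists_prop, Set.mem_ofPred_eq]

end RepeatedTests

section RepeatedFCS

variable {Θ : Type*} (θ₀ : Θ) (C : ℕ → ℕ → Set Θ)

lemma singleton_inter_iInter_Icc_eq_empty_iff (n : ℕ) :
    ({θ₀} : Set Θ) ∩ ⋂ m ∈ Finset.Icc 1 n, ⋂ n' ∈ Finset.Icc m n, C m n' = ∅ ↔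
      ∃ m, 1 ≤ m ∧ ∃ n', m ≤ n' ∧ n' ≤ n ∧ θ₀ ∉ C m n' := by
  simp only [Set.singleton_inter_eq_empty, Set.mem_iInter, Finset.mem_Icc, not_forall,
    exists_prop, and_assoc]
  exact ⟨fun ⟨m, hm, _, n', h⟩ => ⟨m, hm, n', h⟩,
    fun ⟨m, hm, n', hmn', hn', h⟩ => ⟨m, hm, hmn'.trans hn', n', hmn', hn', h⟩⟩

lemma repeatedFCS_le_iff (n : ℕ) :
    sInf ((fun n : ℕ => (n : ℕ∞)) '' {n : ℕ | 1 ≤ n ∧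
        ({θ₀} : Set Θ) ∩ ⋂ m ∈ Finset.Icc 1 n, ⋂ n' ∈ Finset.Icc m n, C m n' = ∅}) ≤ n ↔
      ∃ m, 1 ≤ m ∧ ∃ n', m ≤ n' ∧ n' ≤ n ∧ θ₀ ∉ C m n' := by
  simp only [ENat.sInf_image_natCast_le_natCast_iff, singleton_inter_iInter_Icc_eq_empty_iff]
  constructor
  · rintro ⟨n₀, ⟨-, m, hm, n', hmn', hn', h⟩, hn₀⟩
    exact ⟨m, hm, n', hmn', hn'.trans hn₀, h⟩
  · rintro ⟨m, hm, n', hmn', hn', h⟩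
    exact ⟨n, ⟨hm.trans (hmn'.trans hn'), m, hm, n', hmn', hn', h⟩, le_rfl⟩

end RepeatedFCS

/-- **Lorden's repeated-test detection time equals the repeated-FCS-detector
stopping time.**
Let `Θ` be a set, `θ₀ ∈ Θ`, and `C m n' ⊆ Θ` arbitrary subsets (for `1 ≤ m ≤ n'`). For
each `m ≥ 1` let `N m = inf {n' - m + 1 : n' ≥ m, θ₀ ∉ C m n'} ∈ ℕ ∪ {∞}` be the stopping
time of the sequential test started at time `m`, let `N* = inf_{m ≥ 1} (N m + m - 1)` be
Lorden's detection time, and let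
`τ = inf {n ≥ 1 : {θ₀} ∩ ⋂_{m=1}^n ⋂_{n'=m}^n C m n' = ∅}`. Then `N* = τ`. -/
theorem stmt12_lorden_equals_repeated_FCS
    {Θ : Type*} (θ₀ : Θ) (C : ℕ → ℕ → Set Θ)
    (N : ℕ → ℕ∞)
    (hN : ∀ m : ℕ, N m =
      sInf ((fun k : ℕ => (k : ℕ∞)) ''
        {k : ℕ | ∃ n' : ℕ, m ≤ n' ∧ θ₀ ∉ C m n' ∧ k = n' - m + 1}))
    (Nstar : ℕ∞)
    (hNstar : Nstar = ⨅ m ∈ {m : ℕ | 1 ≤ m}, N m + (m : ℕ∞) - 1)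
    (τ : ℕ∞)
    (hτ : τ = sInf ((fun n : ℕ => (n : ℕ∞)) ''
      {n : ℕ | 1 ≤ n ∧
        ({θ₀} : Set Θ) ∩ ⋂ m ∈ Finset.Icc 1 n, ⋂ n' ∈ Finset.Icc m n, C m n' = ∅})) :
    Nstar = τ := by
  refine ENat.eq_of_forall_le_natCast_iff fun n => ?_
  rw [hNstar, hτ, lordenTime_le_iff (fun m n' => θ₀ ∉ C m n') hN, repeatedFCS_le_iff]
end
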